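/- Let g be a complex simple Lie algebra with highest root θ, and consider its adjoint representation L(θ) = g, so wt g = Φ ⊔ {0}. For i ∈ I, the coordinate face F_i := conv_R(wt_{I\{i}} g) is a codimension-one facet of the root polytope conv_R(Φ) if and only if the affine Dynkin diagram of g with the node α_i removed is connected. -/

import Mathlib

open scoped RealInnerProductSpace

/-- The `ℕ`-cone (additive submonoid) generated by the simple roots indexed by `J`,
i.e. `ℤ_{≥0} Δ_J`. -/
def nnCone {ι E : Type*} [AddCommMonoid E] (α : ι → E) (J : Set ι) : AddSubmonoid E :=
  AddSubmonoid.closure (α '' J)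

/-- The standard parabolic subset of weights `wt_J V^λ := (λ - ℤ_{≥0} Δ_J) ∩ wt V^λ`. -/
def wtJ {ι E : Type*} [AddCommGroup E] (α : ι → E) (lam : E) (wt : Set E) (J : Set ι) :
    Set E :=
  {μ ∈ wt | lam - μ ∈ nnCone α J}

/-- Iterated lowering-operator monomials applied to a vector. -/
def monom {ι V : Type*} [AddCommGroup V] [Module ℂ V] (F : ι → V →ₗ[ℂ] V) (v : V) :
    List ι → V
  | [] => v
  | i :: l => F i (monom F v l)

/-- An abstract axiomatization of a highest weight module over a complex semisimple Lie
algebra, with simple roots `α : ι → E` (in the dual of the Cartan subalgebra), highest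
weight `lam`, weight-space decomposition `wtSp`, lowering (Chevalley) operators `F i`
(for `x_{α_i}^-`), raising operators `Ep i` (for `x_{α_i}^+`), highest weight vector
`vlam`, and coroot pairing `κ μ i` (for `μ(h_i)`). -/
structure IsHWModule {ι E V : Type*} [AddCommGroup E] [AddCommGroup V] [Module ℂ V]
    (α : ι → E) (lam : E) (wtSp : E → Submodule ℂ V) (F Ep : ι → V →ₗ[ℂ] V)
    (vlam : V) (κ : E → ι → ℂ) : Prop where
  vlam_ne : vlam ≠ 0
  vlam_mem : vlam ∈ wtSp lam
  F_wt : ∀ i μ, ∀ v ∈ wtSp μ, F i v ∈ wtSp (μ - α i)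
  E_wt : ∀ i μ, ∀ v ∈ wtSp μ, Ep i v ∈ wtSp (μ + α i)
  hw : ∀ i, Ep i vlam = 0
  gen : Submodule.span ℂ (Set.range (monom F vlam)) = ⊤
  indep : ∀ μ ν : E, μ ≠ ν → ∀ v, v ∈ wtSp μ → v ∈ wtSp ν → v = 0
  sl2 : ∀ i μ, ∀ v ∈ wtSp μ, Ep i (F i v) = F i (Ep i v) + κ μ i • v
  offdiag : ∀ i j, i ≠ j → ∀ v : V, Ep i (F j v) = F j (Ep i v)

/-- The set of weights of the module: those `μ` with nonzero weight space. -/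
def wtSet {E V : Type*} [AddCommGroup V] [Module ℂ V] (wtSp : E → Submodule ℂ V) :
    Set E :=
  {μ | wtSp μ ≠ ⊥}

/-- The set of weights of a submodule `N`. -/
def wtOf {E V : Type*} [AddCommGroup V] [Module ℂ V] (wtSp : E → Submodule ℂ V)
    (N : Submodule ℂ V) : Set E :=
  {μ | ∃ v ∈ N, v ∈ wtSp μ ∧ v ≠ 0}

/-- The submodule `U(g_J) · v` (spanned by lowering monomials in directions `J`). -/
def genSub {ι V : Type*} [AddCommGroup V] [Module ℂ V] (F : ι → V →ₗ[ℂ] V) (v : V)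
    (J : Set ι) : Submodule ℂ V :=
  Submodule.span ℂ {w | ∃ l : List ι, (∀ i ∈ l, i ∈ J) ∧ w = monom F v l}

/-- The set `J(V^λ)` of integrable simple directions:
`{i : λ(h_i) ∈ ℤ_{≥0}, (x_{α_i}^-)^{λ(h_i)+1} v_λ = 0}`. -/
def integrable {ι E V : Type*} [AddCommGroup V] [Module ℂ V]
    (F : ι → V →ₗ[ℂ] V) (vlam : V) (κ : E → ι → ℂ) (lam : E) : Set ι :=
  {i | ∃ n : ℕ, κ lam i = (n : ℂ) ∧ (F i ^ (n + 1)) vlam = 0}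

/-- `N₀` is a simple module for the subalgebra `g_{I0}`. -/
def IsModSimple {ι V : Type*} [AddCommGroup V] [Module ℂ V] (F Ep : ι → V →ₗ[ℂ] V)
    (I0 : Set ι) (N₀ : Submodule ℂ V) : Prop :=
  ∀ N : Submodule ℂ V, N ≤ N₀ → N ≠ ⊥ →
    (∀ j ∈ I0, ∀ v ∈ N, F j v ∈ N) → (∀ j ∈ I0, ∀ v ∈ N, Ep j v ∈ N) → N = N₀

/-- The simple reflection in the hyperplane orthogonal to `a`. -/
noncomputable def sRefl {E : Type*} [NormedAddCommGroup E] [InnerProductSpace ℝ E]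
    [FiniteDimensional ℝ E] (a : E) : E ≃ₗᵢ[ℝ] E :=
  Submodule.reflection ((Submodule.span ℝ {a})ᗮ)

/-- The parabolic subgroup `W_K` of the Weyl group, generated by the simple reflections
`s_k`, `k ∈ K`. -/
noncomputable def weylGrp {ι E : Type*} [NormedAddCommGroup E] [InnerProductSpace ℝ E]
    [FiniteDimensional ℝ E] (α : ι → E) (K : Set ι) : Subgroup (E ≃ₗᵢ[ℝ] E) :=
  Subgroup.closure ((fun i => sRefl (α i)) '' K)

/-- The orbit `W_K(λ)`. -/
noncomputable def weylOrbit {ι E : Type*} [NormedAddCommGroup E] [InnerProductSpace ℝ E]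
    [FiniteDimensional ℝ E] (α : ι → E) (K : Set ι) (lam : E) : Set E :=
  (fun w : E ≃ₗᵢ[ℝ] E => w lam) '' (weylGrp α K : Set (E ≃ₗᵢ[ℝ] E))

/-- The affine Dynkin diagram (as a simple graph on `Option ι`): the node `none`
corresponds to the affine node `α₀ = -θ`, and two nodes are joined iff the corresponding
vectors are non-orthogonal. -/
def affineDiagram {ι E : Type*} [NormedAddCommGroup E] [InnerProductSpace ℝ E]
    (α : ι → E) (θ : E) : SimpleGraph (Option ι) :=
  SimpleGraph.fromRel fun x y =>
    ⟪Option.elim x θ α, Option.elim y θ α⟫ ≠ 0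

/-! ### Auxiliary lemmas -/

section FacetAux

open scoped RealInnerProductSpace

/-- Explicit formula for the simple reflection `sRefl`. -/
lemma sRefl_apply' {E : Type*} [NormedAddCommGroup E] [InnerProductSpace ℝ E]
    [FiniteDimensional ℝ E] (a x : E) :
    sRefl a x = x - (2 * (⟪a, x⟫ / ‖a‖ ^ 2)) • a := by
  have hp : ((Submodule.span ℝ {a}).starProjection x : E) = (⟪a, x⟫ / ‖a‖ ^ 2) • a := by
    simpa using Submodule.starProjection_singleton ℝ (v := a) x
  have h2 : ((((Submodule.span ℝ {a})ᗮ).starProjection x) : E)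
      = x - (⟪a, x⟫ / ‖a‖ ^ 2) • a := by
    have h := (Submodule.span ℝ {a}).starProjection_add_starProjection_orthogonal x
    rw [← hp]; linear_combination (norm := module) h
  rw [sRefl, Submodule.reflection_apply, h2]
  module

/-- Membership in the `ℕ`-cone on the simple roots, via coefficient functions. -/
lemma mem_nnCone_iff' {ι E : Type*} [Fintype ι] [DecidableEq ι] [AddCommMonoid E]
    [Module ℝ E] {α : ι → E} {J : Set ι} {x : E} :
    x ∈ nnCone α J ↔ ∃ f : ι → ℕ, (∀ k, f k ≠ 0 → k ∈ J) ∧ x = ∑ k, (f k : ℝ) • α k := by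
  constructor
  · intro hx
    induction hx using AddSubmonoid.closure_induction with
    | mem y hy =>
      obtain ⟨j, hj, rfl⟩ := hy
      refine ⟨Pi.single j 1, fun k hk => ?_, ?_⟩
      · by_cases h : k = j
        · subst h; exact hj
        · simp [Pi.single_eq_of_ne h] at hk
      · rw [Finset.sum_eq_single j]
        · simp
        · intro k _ hk; simp [Pi.single_eq_of_ne hk]
        · simp
    | zero => exact ⟨0, by simp, by simp⟩
    | add y z hy hz ihy ihz =>
      obtain ⟨f, hf, rfl⟩ := ihy
      obtain ⟨g, hg, rfl⟩ := ihz
      refine ⟨f + g, fun k hk => ?_, ?_⟩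
      · by_cases h : f k = 0
        · exact hg k (by simpa [h] using hk)
        · exact hf k h
      · rw [← Finset.sum_add_distrib]
        congr 1; funext k
        simp only [Pi.add_apply, Nat.cast_add, add_smul]
  · rintro ⟨f, hf, rfl⟩
    refine AddSubmonoid.sum_mem _ (fun k _ => ?_)
    by_cases h : f k = 0
    · simp only [h, Nat.cast_zero, zero_smul]; exact (nnCone α J).zero_mem
    · rw [Nat.cast_smul_eq_nsmul]
      exact (nnCone α J).nsmul_mem
        (AddSubmonoid.subset_closure (Set.mem_image_of_mem α (hf k h))) _

/-- Summing an indicator coefficient. -/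
lemma sum_single_smul' {ι E : Type*} [Fintype ι] [DecidableEq ι] [AddCommMonoid E]
    [Module ℝ E] (α : ι → E) (j : ι) (c : ℝ) :
    ∑ k, (if k = j then c else 0) • α k = c • α j := by
  rw [Finset.sum_eq_single j]
  · simp
  · intro k _ hk; simp [hk]
  · simp

end FacetAux

open scoped RealInnerProductSpace in
/-- for a complex simple Lie algebra `g` with highest root `θ` and adjoint
representation (so `wt g = Φ ∪ {0}`), the coordinate face
`F_i = conv_ℝ(wt_{I \ {i}} g)` is a codimension-one facet of the root polytope
`conv_ℝ(Φ)` iff the affine Dynkin diagram with node `α_i` removed is connected. -/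
theorem facet_iff_affine_connected {ι E : Type*} [Fintype ι] [DecidableEq ι]
    [Nonempty ι] [NormedAddCommGroup E] [InnerProductSpace ℝ E] [FiniteDimensional ℝ E]
    (α : ι → E) (hα : LinearIndependent ℝ α)
    (Φ : Set E) (hΦfin : Φ.Finite) (hΦ0 : (0 : E) ∉ Φ)
    (hroots : ∀ i, α i ∈ Φ)
    (hΦspan : Φ ⊆ (Submodule.span ℝ (Set.range α) : Set E))
    (hΦsymm : ∀ β ∈ Φ, -β ∈ Φ)
    (hΦrefl : ∀ β ∈ Φ, ∀ i, sRefl (α i) β ∈ Φ)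
    (θ : E) (hθ : θ ∈ Φ) (hhigh : ∀ β ∈ Φ, θ - β ∈ nnCone α Set.univ)
    (hsimple : (SimpleGraph.fromRel fun i j : ι => ⟪α i, α j⟫ ≠ 0).Connected)
    (i₀ : ι) :
    Module.finrank ℝ
        (affineSpan ℝ (convexHull ℝ
          (wtJ α θ (Φ ∪ {0}) (Set.univ \ {i₀})))).direction
      = Fintype.card ι - 1 ↔
    ((affineDiagram α θ).induce {x : Option ι | x ≠ some i₀}).Connected := by
    classical
  set J : Set ι := Set.univ \ {i₀} with hJdef
  set S : Set E := wtJ α θ (Φ ∪ {0}) J with hSdef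
  have hJmem : ∀ k : ι, k ∈ J ↔ k ≠ i₀ := fun k => by simp [hJdef]
  -- uniqueness of coefficients
  have hcu : ∀ f g : ι → ℝ, ∑ k, f k • α k = ∑ k, g k • α k → ∀ k, f k = g k := by
    intro f g h k
    have h0 : ∑ k, (f - g) k • α k = 0 := by
      simp only [Pi.sub_apply, sub_smul, Finset.sum_sub_distrib, h, sub_self]
    have := Fintype.linearIndependent_iff.mp hα _ h0 k
    simpa [sub_eq_zero] using this
  have hαne : ∀ k, α k ≠ 0 := fun k => hα.ne_zero k
  have hαnorm : ∀ k, (0:ℝ) < ‖α k‖ ^ 2 := fun k => by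
    have := norm_pos_iff.mpr (hαne k); positivity
  have hθmemS : θ ∈ S := ⟨Or.inl hθ, by rw [sub_self]; exact (nnCone α J).zero_mem⟩
  obtain ⟨c0, hc0J, hc0⟩ := mem_nnCone_iff'.mp (hhigh (α i₀) (hroots i₀))
  -- every element of S is a root
  have hSPhi : ∀ μ ∈ S, μ ∈ Φ := by
    rintro μ ⟨hw, hc⟩
    rcases hw with h | h
    · exact h
    · exfalso
      rw [Set.mem_singleton_iff] at h
      subst h
      obtain ⟨f, hfJ, hf⟩ := mem_nnCone_iff'.mp hc
      rw [sub_zero] at hf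
      have key : ∀ k, (f k : ℝ) = (c0 k : ℝ) + (if k = i₀ then 1 else 0) := by
        apply hcu
        rw [← hf]
        have hθeq : θ = (∑ k, (c0 k : ℝ) • α k) + α i₀ := by
          rw [← hc0]; abel
        conv_lhs => rw [hθeq]
        simp only [add_smul]
        rw [Finset.sum_add_distrib, sum_single_smul', one_smul]
      have hfi₀ : f i₀ = 0 := by
        by_contra h'
        exact ((hJmem i₀).mp (hfJ i₀ h')) rfl
      have := key i₀
      rw [if_pos rfl, hfi₀] at this
      have hge : (0:ℝ) ≤ (c0 i₀ : ℝ) := Nat.cast_nonneg _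
      norm_num at this
      linarith
  -- the reflection lemma: reflecting an element of S in a simple root ≠ α i₀ stays in S
  have hrefl : ∀ μ ∈ S, ∀ j, j ≠ i₀ → ∀ f : ι → ℕ, (∀ k, f k ≠ 0 → k ∈ J) →
      θ - μ = ∑ k, (f k : ℝ) • α k →
      ∃ m : ι → ℕ, (∀ k, m k ≠ 0 → k ∈ J) ∧
        (μ - (2 * (⟪α j, μ⟫ / ‖α j‖ ^ 2)) • α j) ∈ S ∧
        θ - (μ - (2 * (⟪α j, μ⟫ / ‖α j‖ ^ 2)) • α j) = ∑ k, (m k : ℝ) • α k ∧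
        (∀ k, k ≠ j → m k = f k) ∧
        ((m j : ℝ) = (f j : ℝ) + 2 * (⟪α j, μ⟫ / ‖α j‖ ^ 2)) := by
    intro μ hμ j hj f hfJ hf
    set c : ℝ := 2 * (⟪α j, μ⟫ / ‖α j‖ ^ 2) with hc
    have hν : μ - c • α j ∈ Φ := by
      have := hΦrefl μ (hSPhi μ hμ) j
      rwa [sRefl_apply'] at this
    obtain ⟨m, hmU, hm⟩ := mem_nnCone_iff'.mp (hhigh _ hν)
    have hmeq : ∀ k, (m k : ℝ) = (f k : ℝ) + (if k = j then c else 0) := by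
      apply hcu
      rw [← hm]
      have h1 : θ - (μ - c • α j) = (θ - μ) + c • α j := by abel
      rw [h1, hf]
      simp only [add_smul]
      rw [Finset.sum_add_distrib, sum_single_smul']
    have hmi₀ : m i₀ = 0 := by
      have h0 : (m i₀ : ℝ) = (f i₀ : ℝ) := by
        rw [hmeq i₀, if_neg (fun h => hj h.symm), add_zero]
      have hfi₀ : f i₀ = 0 := by
        by_contra h'
        exact ((hJmem i₀).mp (hfJ i₀ h')) rfl
      rw [hfi₀] at h0
      exact_mod_cast h0
    have hmJ : ∀ k, m k ≠ 0 → k ∈ J := by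
      intro k hk
      rcases eq_or_ne k i₀ with rfl | hne
      · exact absurd hmi₀ hk
      · exact (hJmem k).mpr hne
    refine ⟨m, hmJ, ⟨Or.inl hν, mem_nnCone_iff'.mpr ⟨m, hmJ, hm⟩⟩, hm, ?_, ?_⟩
    · intro k hk
      have := hmeq k
      rw [if_neg hk, add_zero] at this
      exact_mod_cast this
    · have := hmeq j
      rwa [if_pos rfl] at this
  -- the direction submodule
  set D : Submodule ℝ E := Submodule.span ℝ ((fun μ => μ -ᵥ θ) '' S) with hDdef
  have hgenD : ∀ μ ∈ S, μ - θ ∈ D := by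
    intro μ h
    exact Submodule.subset_span ⟨μ, h, by simp [vsub_eq_sub]⟩
  have hdir : (affineSpan ℝ (convexHull ℝ S)).direction = D := by
    rw [affineSpan_convexHull, direction_affineSpan,
      vectorSpan_eq_span_vsub_set_right ℝ hθmemS]
  -- key equivalence: α j ∈ D ↔ some element of S is non-orthogonal to α j
  have hkey : ∀ j, j ≠ i₀ → (α j ∈ D ↔ ∃ μ ∈ S, ⟪μ, α j⟫ ≠ 0) := by
    intro j hj
    constructor
    · intro hjD
      by_contra hno
      push_neg at hno
      have hD0 : D ≤ (Submodule.span ℝ {α j})ᗮ := by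
        rw [hDdef, Submodule.span_le]
        rintro _ ⟨μ, hμ, rfl⟩
        rw [SetLike.mem_coe, Submodule.mem_orthogonal_singleton_iff_inner_right]
        show ⟪α j, μ - θ⟫ = 0
        rw [inner_sub_right, real_inner_comm μ (α j),
          real_inner_comm θ (α j), hno μ hμ, hno θ hθmemS, sub_zero]
      have h := hD0 hjD
      rw [Submodule.mem_orthogonal_singleton_iff_inner_right] at h
      exact hαne j (inner_self_eq_zero.mp h)
    · rintro ⟨μ, hμ, hin⟩
      obtain ⟨f, hfJ, hf⟩ := mem_nnCone_iff'.mp hμ.2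
      obtain ⟨m, hmJ, hνS, hm, hoff, hmj⟩ := hrefl μ hμ j hj f hfJ hf
      set c : ℝ := 2 * (⟪α j, μ⟫ / ‖α j‖ ^ 2) with hc
      have hcne : c ≠ 0 := by
        apply mul_ne_zero two_ne_zero
        exact div_ne_zero (by rwa [real_inner_comm]) (ne_of_gt (hαnorm j))
      have hmemν : c • α j ∈ D := by
        have h1 := hgenD μ hμ
        have h2 := hgenD _ hνS
        have h3 := D.sub_mem h1 h2
        have h4 : (μ - θ) - ((μ - c • α j) - θ) = c • α j := by abel
        rwa [h4] at h3
      have h5 := D.smul_mem c⁻¹ hmemν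
      rwa [smul_smul, inv_mul_cancel₀ hcne, one_smul] at h5
  -- graph abbreviations
  set G := (affineDiagram α θ).induce {x : Option ι | x ≠ some i₀} with hGdef
  have hsomemem : ∀ {b : ι}, b ≠ i₀ → (some b ∈ {x : Option ι | x ≠ some i₀}) := by
    intro b hb; simpa using hb
  have hnonemem : (none : Option ι) ∈ {x : Option ι | x ≠ some i₀} := by simp
  set v0 : ↥{x : Option ι | x ≠ some i₀} := ⟨none, hnonemem⟩ with hv0
  have hadj : ∀ u v : ↥{x : Option ι | x ≠ some i₀}, G.Adj u v ↔
      ((u:Option ι) ≠ (v:Option ι) ∧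
        ⟪Option.elim (u:Option ι) θ α, Option.elim (v:Option ι) θ α⟫ ≠ 0) := by
    intro u v
    constructor
    · intro h
      have h' : (affineDiagram α θ).Adj u v := h
      rw [affineDiagram, SimpleGraph.fromRel_adj] at h'
      exact ⟨h'.1, h'.2.elim id (fun h2 => by rwa [real_inner_comm] at h2)⟩
    · rintro ⟨h1, h2⟩
      show (affineDiagram α θ).Adj u v
      rw [affineDiagram, SimpleGraph.fromRel_adj]
      exact ⟨h1, Or.inl h2⟩
  -- the set of "bad" indices: not reachable from the affine node
  set Bad : ι → Prop :=
    fun b => ∃ hb : b ≠ i₀, ¬ G.Reachable v0 ⟨some b, hsomemem hb⟩ with hBaddef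
  have hθB : ∀ b, Bad b → ⟪θ, α b⟫ = 0 := by
    rintro b ⟨hb, hnr⟩
    by_contra hne
    refine hnr (SimpleGraph.Adj.reachable ((hadj v0 ⟨some b, hsomemem hb⟩).mpr ⟨?_, ?_⟩))
    · simp [hv0]
    · simpa [hv0] using hne
  have hreachgood : ∀ k (hk : k ≠ i₀), ¬ Bad k → G.Reachable v0 ⟨some k, hsomemem hk⟩ := by
    intro k hk hnb
    by_contra hr
    exact hnb ⟨hk, hr⟩
  have hCB : ∀ k b, k ≠ i₀ → ¬ Bad k → Bad b → ⟪α k, α b⟫ = 0 := by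
    intro k b hk hnk hbb
    obtain ⟨hb, hnr⟩ := hbb
    by_contra hne
    have hkb : k ≠ b := by
      rintro rfl
      exact hnk ⟨hb, hnr⟩
    have hrk := hreachgood k hk hnk
    have hadjkb : G.Adj ⟨some k, hsomemem hk⟩ ⟨some b, hsomemem hb⟩ :=
      (hadj _ _).mpr ⟨by simpa using hkb, by simpa using hne⟩
    exact hnr (hrk.trans hadjkb.reachable)
  -- THE KEY CLAIM: every element of S is orthogonal to all bad simple roots
  have claim : ∀ N : ℕ, ∀ μ ∈ S, ∀ f : ι → ℕ, (∀ k, f k ≠ 0 → k ∈ J) →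
      θ - μ = ∑ k, (f k : ℝ) • α k → (∑ k, f k) ≤ N → ∀ b, Bad b → ⟪μ, α b⟫ = 0 := by
    intro N
    induction N using Nat.strong_induction_on with
    | _ N ih =>
    intro μ hμ f hfJ hf hN b hb
    by_cases hB0 : ∀ k, Bad k → f k = 0
    · -- no bad support: direct computation
      have hμb : ⟪μ, α b⟫ = ⟪θ, α b⟫ - ⟪θ - μ, α b⟫ := by
        rw [inner_sub_left]; ring
      rw [hμb, hθB b hb, hf, sum_inner, zero_sub, neg_eq_zero]
      refine Finset.sum_eq_zero (fun k _ => ?_)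
      by_cases hfk : f k = 0
      · simp [hfk]
      · have hkJ := hfJ k hfk
        have hkne : k ≠ i₀ := (hJmem k).mp hkJ
        have hnbk : ¬ Bad k := fun h => hfk (hB0 k h)
        rw [real_inner_smul_left, hCB k b hkne hnbk hb, mul_zero]
    · -- there is bad support: derive a contradiction
      exfalso
      push_neg at hB0
      obtain ⟨k₀, hk₀bad, hk₀f⟩ := hB0
      set Bset : Finset ι := Finset.univ.filter Bad with hBset
      have hmemB : ∀ k, k ∈ Bset ↔ Bad k := fun k => by simp [hBset]
      set δB : E := ∑ k ∈ Bset, (f k : ℝ) • α k with hδBdef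
      have hδBne : δB ≠ 0 := by
        intro h0
        apply hk₀f
        have hgeq : ∀ k, (if k ∈ Bset then (f k : ℝ) else 0) = (0 : ℝ) := by
          apply hcu _ (fun _ => 0)
          have heq1 : ∑ k, (if k ∈ Bset then (f k : ℝ) else 0) • α k = δB := by
            rw [hδBdef]
            calc ∑ k, (if k ∈ Bset then (f k : ℝ) else 0) • α k
                = ∑ k, (if k ∈ Bset then (f k : ℝ) • α k else 0) := by
                  refine Finset.sum_congr rfl fun k _ => ?_
                  split <;> simp
              _ = ∑ k ∈ Bset, (f k : ℝ) • α k := by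
                  rw [Finset.sum_ite_mem, Finset.univ_inter]
          rw [heq1, h0]
          simp
        have h2 := hgeq k₀
        rw [if_pos ((hmemB k₀).mpr hk₀bad)] at h2
        exact_mod_cast h2
      -- ⟪θ, δB⟫ = 0
      have hθδB : ⟪θ, δB⟫ = 0 := by
        rw [hδBdef, inner_sum]
        refine Finset.sum_eq_zero (fun k hk => ?_)
        rw [real_inner_smul_right, hθB k ((hmemB k).mp hk), mul_zero]
      -- ⟪θ - μ, δB⟫ = ‖δB‖ ^ 2
      have hδδB : ⟪θ - μ, δB⟫ = ‖δB‖ ^ 2 := by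
        have hsplit : (∑ k, (f k : ℝ) • α k)
            = δB + ∑ k ∈ Bsetᶜ, (f k : ℝ) • α k := by
          rw [hδBdef, Finset.sum_add_sum_compl]
        rw [hf, hsplit, inner_add_left, real_inner_self_eq_norm_sq]
        have hrest : ⟪∑ k ∈ Bsetᶜ, (f k : ℝ) • α k, δB⟫ = 0 := by
          rw [sum_inner]
          refine Finset.sum_eq_zero (fun k hk => ?_)
          rw [Finset.mem_compl] at hk
          by_cases hfk : f k = 0
          · simp [hfk]
          · have hkne : k ≠ i₀ := (hJmem k).mp (hfJ k hfk)
            have hnbk : ¬ Bad k := fun hbk => hk ((hmemB k).mpr hbk)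
            rw [real_inner_smul_left, hδBdef, inner_sum, Finset.sum_eq_zero, mul_zero]
            intro l hl
            rw [real_inner_smul_right, hCB k l hkne hnbk ((hmemB l).mp hl), mul_zero]
        rw [hrest, add_zero]
      have hμδB : ⟪μ, δB⟫ < 0 := by
        have h1 : ⟪μ, δB⟫ = ⟪θ, δB⟫ - ⟪θ - μ, δB⟫ := by rw [inner_sub_left]; ring
        rw [h1, hθδB, hδδB, zero_sub, neg_lt, neg_zero]
        have := norm_pos_iff.mpr hδBne
        positivity
      -- find a bad index with negative inner product
      have hex : ∃ b1 ∈ Bset, (f b1 : ℝ) * ⟪μ, α b1⟫ < 0 := by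
        by_contra hall
        push_neg at hall
        have : (0:ℝ) ≤ ⟪μ, δB⟫ := by
          rw [hδBdef, inner_sum]
          refine Finset.sum_nonneg (fun k hk => ?_)
          rw [real_inner_smul_right]
          exact hall k hk
        linarith
      obtain ⟨b1, hb1B, hb1neg⟩ := hex
      have hb1bad : Bad b1 := (hmemB b1).mp hb1B
      obtain ⟨hb1ne, hb1nr⟩ := hb1bad
      have hfb1pos : 0 < (f b1 : ℝ) := by
        rcases (Nat.eq_zero_or_pos (f b1)) with h | h
        · rw [h] at hb1neg; norm_num at hb1neg
        · exact_mod_cast h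
      have hμb1neg : ⟪μ, α b1⟫ < 0 := by
        by_contra hge
        push_neg at hge
        nlinarith
      -- reflect and recurse
      obtain ⟨m, hmJ, hνS, hm, hoff, hmb1⟩ := hrefl μ hμ b1 hb1ne f hfJ hf
      set c : ℝ := 2 * (⟪α b1, μ⟫ / ‖α b1‖ ^ 2) with hcdef
      have hcneg : c < 0 := by
        rw [hcdef, real_inner_comm]
        have := hαnorm b1
        have : ⟪μ, α b1⟫ / ‖α b1‖ ^ 2 < 0 := div_neg_of_neg_of_pos hμb1neg (hαnorm b1)
        linarith
      have hmb1lt : m b1 < f b1 := by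
        have : (m b1 : ℝ) < (f b1 : ℝ) := by rw [hmb1]; linarith
        exact_mod_cast this
      have hsumlt : (∑ k, m k) < ∑ k, f k := by
        refine Finset.sum_lt_sum (fun k _ => ?_) ⟨b1, Finset.mem_univ b1, hmb1lt⟩
        by_cases hk : k = b1
        · subst hk; exact hmb1lt.le
        · rw [hoff k hk]
      have hres := ih (∑ k, m k) (lt_of_lt_of_le hsumlt hN) _ hνS m hmJ hm le_rfl b1 ⟨hb1ne, hb1nr⟩
      -- but ⟪ν, α b1⟫ = -⟪μ, α b1⟫ > 0
      have hcomp : ⟪μ - c • α b1, α b1⟫ = - ⟪μ, α b1⟫ := by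
        rw [inner_sub_left, real_inner_smul_left, real_inner_self_eq_norm_sq, hcdef]
        have hn := (hαnorm b1).ne'
        have hn1 : ‖α b1‖ ≠ 0 := norm_ne_zero_iff.mpr (hαne b1)
        field_simp
        rw [real_inner_comm]
        ring
      rw [hcomp] at hres
      linarith
  -- backward: connectivity gives non-orthogonal elements
  have hback : G.Connected → ∀ j, j ≠ i₀ → ∃ μ ∈ S, ⟪μ, α j⟫ ≠ 0 := by
    intro hconn j hj
    set P : ↥{x : Option ι | x ≠ some i₀} → Prop :=
      fun v => ∀ j', (v : Option ι) = some j' → ∃ μ ∈ S, ⟪μ, α j'⟫ ≠ 0 with hPdef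
    have hstep : ∀ u v, G.Adj u v → P u → P v := by
      intro u v huv hu j' hvj'
      obtain ⟨hne, hin⟩ := (hadj u v).mp huv
      rw [hvj'] at hin hne
      cases hu1 : (u : Option ι) with
      | none =>
        rw [hu1] at hin
        exact ⟨θ, hθmemS, by simpa using hin⟩
      | some j'' =>
        rw [hu1] at hin hne
        have hj'' : j'' ≠ i₀ := by
          intro e
          exact u.2 (by rw [hu1, e])
        have hj''j' : ⟪α j'', α j'⟫ ≠ 0 := by simpa using hin
        obtain ⟨μ', hμ'S, hμ'in⟩ := hu j'' hu1
        by_cases hcase : ⟪μ', α j'⟫ ≠ 0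
        · exact ⟨μ', hμ'S, hcase⟩
        · push_neg at hcase
          obtain ⟨f, hfJ, hf⟩ := mem_nnCone_iff'.mp hμ'S.2
          obtain ⟨m, hmJ, hνS, hm, hoff, hmj⟩ := hrefl μ' hμ'S j'' hj'' f hfJ hf
          set c : ℝ := 2 * (⟪α j'', μ'⟫ / ‖α j''‖ ^ 2) with hcdef
          have hcne : c ≠ 0 := by
            apply mul_ne_zero two_ne_zero
            exact div_ne_zero (by rwa [real_inner_comm]) (ne_of_gt (hαnorm j''))
          refine ⟨μ' - c • α j'', hνS, ?_⟩
          rw [inner_sub_left, hcase, real_inner_smul_left, zero_sub, neg_ne_zero]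
          exact mul_ne_zero hcne hj''j'
    have hwalk : ∀ u v (p : G.Walk u v), P u → P v := by
      intro u v p
      induction p with
      | nil => exact id
      | cons h _ ih => exact fun hu => ih (hstep _ _ h hu)
    obtain ⟨p⟩ := hconn.preconnected v0 ⟨some j, hsomemem hj⟩
    exact hwalk _ _ p (fun j' h => by simp [hv0] at h) j rfl
  -- forward: non-orthogonality everywhere gives connectivity
  have hfor : (∀ j, j ≠ i₀ → ∃ μ ∈ S, ⟪μ, α j⟫ ≠ 0) → G.Connected := by
    intro hprop
    have hreach : ∀ v : ↥{x : Option ι | x ≠ some i₀}, G.Reachable v0 v := by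
      rintro ⟨x, hx⟩
      cases x with
      | none => exact SimpleGraph.Reachable.refl _
      | some j =>
        have hj : j ≠ i₀ := by
          intro e
          exact hx (by rw [e])
        by_contra hnr
        have hbad : Bad j := ⟨hj, hnr⟩
        obtain ⟨μ, hμ, hin⟩ := hprop j hj
        obtain ⟨f, hfJ, hfeq⟩ := mem_nnCone_iff'.mp hμ.2
        exact hin (claim (∑ k, f k) μ hμ f hfJ hfeq le_rfl j hbad)
    haveI : Nonempty ↥{x : Option ι | x ≠ some i₀} := ⟨v0⟩
    exact ⟨fun u v => (hreach u).symm.trans (hreach v)⟩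
  -- the finrank dichotomy
  set K : Submodule ℝ E := Submodule.span ℝ (α '' J) with hKdef
  have hDK : D ≤ K := by
    rw [hDdef, Submodule.span_le]
    rintro _ ⟨μ, hμ, rfl⟩
    obtain ⟨f, hfJ, hfeq⟩ := mem_nnCone_iff'.mp hμ.2
    have hmem : θ - μ ∈ K := by
      rw [hfeq]
      refine Submodule.sum_mem _ (fun k _ => ?_)
      by_cases hfk : f k = 0
      · simp [hfk]
      · exact K.smul_mem _ (Submodule.subset_span ⟨k, hfJ k hfk, rfl⟩)
    have := K.neg_mem hmem
    rw [neg_sub] at this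
    simpa [vsub_eq_sub] using this
  have hKrank : Module.finrank ℝ K = Fintype.card ι - 1 := by
    rw [hKdef]
    haveI : Fintype ↑(α '' J) := Fintype.ofFinite _
    rw [finrank_span_set_eq_card]
    · rw [Set.toFinset_card, Set.card_image_of_injective _ hα.injective]
      have h1 : Fintype.card ↥J = Fintype.card {x : ι // ¬ (x = i₀)} :=
        Fintype.card_congr (Equiv.subtypeEquivRight (by simp [hJdef]))
      rw [h1, Fintype.card_subtype_compl, Fintype.card_subtype_eq]
    · exact LinearIndepOn.id_image (hα.comp _ Subtype.val_injective)
  have hfr : Module.finrank ℝ D = Fintype.card ι - 1 ↔ ∀ j, j ≠ i₀ → α j ∈ D := by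
    constructor
    · intro h j hj
      have hDKeq : D = K := Submodule.eq_of_le_of_finrank_eq hDK (h.trans hKrank.symm)
      rw [hDKeq, hKdef]
      exact Submodule.subset_span ⟨j, (hJmem j).mpr hj, rfl⟩
    · intro h
      have hKD : K ≤ D := by
        rw [hKdef, Submodule.span_le]
        rintro _ ⟨j, hjJ, rfl⟩
        exact h j ((hJmem j).mp hjJ)
      rw [le_antisymm hDK hKD, hKrank]
  -- assemble
  rw [hdir, hfr]
  constructor
  · intro h
    exact hfor (fun j hj => (hkey j hj).mp (h j hj))
  · intro hconn j hj
    exact (hkey j hj).mpr (hback hconn j hj)
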